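/- Let c be a real number with 0 < c < 1 and let I be a nonempty finite set. Then there exists a finite subset S of the set R(c) = { a = (a_i)_{i ∈ I} : a_i ≥ 0 for all i and ∑_{i ∈ I} a_i = c } with the following property: for every tuple b = (b_i)_{i ∈ I} of nonnegative real numbers, there exists a = (a_i) ∈ S such that b_j ≥ a_j · (∑_{i ∈ I} b_i) for all j ∈ I. -/

import Mathlib

theorem simplex_finite_net (c : ℝ) (hc0 : 0 < c) (hc1 : c < 1)
    (I : Type*) [Fintype I] [Nonempty I] :
    ∃ S : Finset (I → ℝ),
      (∀ a ∈ S, (∀ i, 0 ≤ a i) ∧ ∑ i, a i = c) ∧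
      ∀ b : I → ℝ, (∀ i, 0 ≤ b i) →
        ∃ a ∈ S, ∀ j, b j ≥ a j * ∑ i, b i := by
  classical
  set n := Fintype.card I with hn
  have hn0 : 0 < n := Fintype.card_pos
  set N : ℕ := n + ⌈(n : ℝ) / (1 - c)⌉₊ + 1 with hNdef
  have h1c : 0 < 1 - c := by linarith
  have hNn : n < N := by omega
  have hNc : (n : ℝ) ≤ (1 - c) * N := by
    have h1 : (n : ℝ) / (1 - c) ≤ (⌈(n : ℝ) / (1 - c)⌉₊ : ℝ) := Nat.le_ceil _
    have h2 : ((⌈(n : ℝ) / (1 - c)⌉₊ : ℕ) : ℝ) ≤ (N : ℝ) := by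
      exact_mod_cast Nat.le_of_lt (by omega)
    have := (div_le_iff₀ h1c).mp (h1.trans h2)
    linarith [this]
  set F : (I → Fin (N + 1)) → (I → ℝ) :=
    fun k i => c * ((k i : ℕ) : ℝ) / ∑ j, ((k j : ℕ) : ℝ) with hF
  set S : Finset (I → ℝ) :=
    (Finset.univ.filter (fun k : I → Fin (N + 1) => 0 < ∑ i, (k i : ℕ))).image F with hS
  refine ⟨S, ?_, ?_⟩
  · intro a ha
    rw [hS, Finset.mem_image] at ha
    obtain ⟨k, hk, rfl⟩ := ha
    rw [Finset.mem_filter] at hk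
    have hKpos : (0 : ℝ) < ∑ j, ((k j : ℕ) : ℝ) := by
      have := hk.2
      push_cast
      exact_mod_cast this
    constructor
    · intro i
      exact div_nonneg (mul_nonneg hc0.le (Nat.cast_nonneg _)) hKpos.le
    · rw [hF]
      simp only
      rw [← Finset.sum_div, ← Finset.mul_sum, mul_div_assoc, div_self hKpos.ne', mul_one]
  · intro b hb
    set B := ∑ i, b i with hB
    have hB0 : 0 ≤ B := Finset.sum_nonneg fun i _ => hb i
    rcases hB0.lt_or_eq with hBpos | hBzero
    · -- B > 0
      set t : I → ℝ := fun i => b i / B with ht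
      have ht0 : ∀ i, 0 ≤ t i := fun i => div_nonneg (hb i) hB0
      have ht1 : ∀ i, t i ≤ 1 := by
        intro i
        rw [ht]
        rw [div_le_one hBpos]
        exact Finset.single_le_sum (fun j _ => hb j) (Finset.mem_univ i)
      have htsum : ∑ i, t i = 1 := by
        rw [ht, ← Finset.sum_div, ← hB, div_self hBpos.ne']
      set k : I → ℕ := fun i => ⌊(N : ℝ) * t i⌋₊ with hk
      have hkN : ∀ i, k i ≤ N := by
        intro i
        rw [hk]
        calc ⌊(N : ℝ) * t i⌋₊ ≤ ⌊(N : ℝ)⌋₊ :=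
              Nat.floor_le_floor (by nlinarith [ht1 i, ht0 i, Nat.cast_nonneg (α := ℝ) N])
          _ = N := Nat.floor_natCast N
      set k' : I → Fin (N + 1) := fun i => ⟨k i, Nat.lt_succ_of_le (hkN i)⟩ with hk'
      have hkle : ∀ i, ((k i : ℕ) : ℝ) ≤ (N : ℝ) * t i := by
        intro i
        exact Nat.floor_le (mul_nonneg (Nat.cast_nonneg _) (ht0 i))
      have hkgt : ∀ i, (N : ℝ) * t i - 1 < ((k i : ℕ) : ℝ) := by
        intro i
        exact Nat.sub_one_lt_floor _
      set K : ℝ := ∑ i, ((k' i : ℕ) : ℝ) with hK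
      have hKeq : K = ∑ i, ((k i : ℕ) : ℝ) := rfl
      have hKlb : (N : ℝ) - n < K := by
        have hsum : ∑ i, ((N : ℝ) * t i - 1) < ∑ i, ((k i : ℕ) : ℝ) :=
          Finset.sum_lt_sum_of_nonempty Finset.univ_nonempty (fun i _ => hkgt i)
        have : ∑ i, ((N : ℝ) * t i - 1) = (N : ℝ) - n := by
          rw [Finset.sum_sub_distrib, ← Finset.mul_sum, htsum]
          simp [hn]
        linarith [hsum, this.symm.le]
      have hcNK : c * N ≤ K := by nlinarith
      have hKpos : 0 < K := by
        have : (0 : ℝ) < c * N := by positivity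
        linarith
      refine ⟨F k', ?_, ?_⟩
      · rw [hS, Finset.mem_image]
        refine ⟨k', Finset.mem_filter.mpr ⟨Finset.mem_univ _, ?_⟩, rfl⟩
        by_contra h
        push_neg at h
        interval_cases h' : (∑ i, ((k' i : Fin (N+1)) : ℕ))
        · have : K = 0 := by
            rw [hK]
            exact_mod_cast congrArg (Nat.cast (R := ℝ)) h'
          linarith
      · intro j
        rw [hF]
        simp only
        rw [ge_iff_le, div_mul_eq_mul_div, div_le_iff₀ hKpos]
        have hkj : ((k' j : ℕ) : ℝ) * B ≤ (N : ℝ) * b j := by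
          have h1 := hkle j
          have : (N : ℝ) * t j * B = (N : ℝ) * b j := by
            rw [ht]
            field_simp
          nlinarith [hB0]
        nlinarith [mul_le_mul_of_nonneg_left hkj hc0.le,
          mul_le_mul_of_nonneg_right hcNK (hb j)]
    · -- B = 0
      set k' : I → Fin (N + 1) := fun _ => ⟨1, by omega⟩ with hk'
      have hmem : F k' ∈ S := by
        rw [hS, Finset.mem_image]
        refine ⟨k', Finset.mem_filter.mpr ⟨Finset.mem_univ _, ?_⟩, rfl⟩
        simp [hk', hn0]
        exact ⟨Fintype.card_pos, by rw [Nat.mod_eq_of_lt (by omega : 1 < N + 1)]; omega⟩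
      refine ⟨F k', hmem, ?_⟩
      intro j
      rw [← hBzero, mul_zero]
      exact hb j
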